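/- arXiv:2304.10798 — 3 statements merged into one kernel-verified Lean document; each statement's English description precedes it below -/
import Mathlib

section
/- Let w be an N×N permutation matrix and let v be another N×N permutation matrix. For indices i ∈ {1,…,N} and j ∈ {1,…,N}, let w_{i×j} denote the southwest submatrix of w consisting of the bottom i rows and leftmost j columns. Then w = v if and only if rank(w_{i×j}) = rank(v_{i×j}) for all i, j. -/
/-- The permutation matrix of `w ∈ S_N` (entry `(i,j)` is `1` iff `i = w j`). -/
def permMatrix (N : ℕ) (w : Equiv.Perm (Fin N)) : Matrix (Fin N) (Fin N) ℚ :=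
  fun i j => if i = w j then 1 else 0

/-- Rank of the southwest submatrix consisting of the bottom `i` rows and leftmost
`j` columns of the permutation matrix of `w`. -/
noncomputable def swRank (N : ℕ) (w : Equiv.Perm (Fin N)) (i j : ℕ) : ℕ :=
  ((permMatrix N w).submatrix
    (fun a : {a : Fin N // N - i ≤ (a : ℕ)} => a.1)
    (fun b : {b : Fin N // (b : ℕ) < j} => b.1)).rank

lemma swRank_eq_card (N : ℕ) (w : Equiv.Perm (Fin N)) (i j : ℕ) :
    swRank N w i j
      = Fintype.card {k : Fin N // (k : ℕ) < j ∧ N - i ≤ (w k : ℕ)} := by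
  classical
  set M := ((permMatrix N w).submatrix
    (fun a : {a : Fin N // N - i ≤ (a : ℕ)} => a.1)
    (fun b : {b : Fin N // (b : ℕ) < j} => b.1)) with hM
  have hd : M.transpose * M = Matrix.diagonal
      (fun b : {b : Fin N // (b : ℕ) < j} =>
        if N - i ≤ (w b.1 : ℕ) then (1 : ℚ) else 0) := by
    ext b b'
    simp only [Matrix.mul_apply, Matrix.transpose_apply, hM, Matrix.submatrix_apply,
      permMatrix]
    by_cases hbb : b = b'
    · subst hbb
      by_cases hle : N - i ≤ (w b.1 : ℕ)
      · rw [Finset.sum_eq_single (⟨w b.1, hle⟩ : {a : Fin N // N - i ≤ (a : ℕ)})]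
        · simp only [Matrix.diagonal_apply_eq, if_pos hle]
          simp
        · intro a _ ha
          have : a.1 ≠ w b.1 := by
            intro h; apply ha; exact Subtype.ext h
          simp [this]
        · simp
      · have : ∀ a : {a : Fin N // N - i ≤ (a : ℕ)}, a.1 ≠ w b.1 := by
          intro a h; exact hle (h ▸ a.2)
        simp only [Matrix.diagonal_apply_eq]
        rw [Finset.sum_eq_zero]
        · simp [hle]
        · intro a _; simp [this a]
    · have hw : w b.1 ≠ w b'.1 := by
        simp only [ne_eq, EmbeddingLike.apply_eq_iff_eq]
        intro h; exact hbb (Subtype.ext h)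
      rw [Matrix.diagonal_apply_ne _ hbb, Finset.sum_eq_zero]
      intro a _
      by_cases h1 : a.1 = w b.1
      · have h2 : a.1 ≠ w b'.1 := h1 ▸ hw
        simp [h2]
      · simp [h1]
  have h1 : M.rank = (M.transpose * M).rank := (Matrix.rank_transpose_mul_self M).symm
  rw [swRank, ← hM, h1, hd, Matrix.rank_diagonal]
  have e : {b : {b : Fin N // (b : ℕ) < j} //
      (if N - i ≤ (w b.1 : ℕ) then (1 : ℚ) else 0) ≠ 0}
      ≃ {k : Fin N // (k : ℕ) < j ∧ N - i ≤ (w k : ℕ)} := by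
    refine ⟨fun b => ⟨b.1.1, b.1.2, ?_⟩, fun k => ⟨⟨k.1, k.2.1⟩, ?_⟩, ?_, ?_⟩
    · by_contra h
      exact b.2 (by simp [h])
    · simp [k.2.2]
    · intro b; ext; rfl
    · intro k; ext; rfl
  exact Fintype.card_congr e

lemma card_succ (N : ℕ) (w : Equiv.Perm (Fin N)) (i : ℕ) (j : Fin N) :
    Fintype.card {k : Fin N // (k : ℕ) < (j : ℕ) + 1 ∧ N - i ≤ (w k : ℕ)}
      = Fintype.card {k : Fin N // (k : ℕ) < (j : ℕ) ∧ N - i ≤ (w k : ℕ)}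
        + (if N - i ≤ (w j : ℕ) then 1 else 0) := by
  classical
  rw [Fintype.card_subtype, Fintype.card_subtype]
  rw [show (Finset.univ.filter fun k : Fin N => (k : ℕ) < (j : ℕ) + 1 ∧ N - i ≤ (w k : ℕ))
      = (Finset.univ.filter fun k : Fin N => (k : ℕ) < (j : ℕ) ∧ N - i ≤ (w k : ℕ))
        ∪ (Finset.univ.filter fun k : Fin N => k = j ∧ N - i ≤ (w k : ℕ)) from ?_]
  · rw [Finset.card_union_of_disjoint]
    · congr 1
      by_cases h : N - i ≤ (w j : ℕ)
      · rw [Finset.filter_and, Finset.filter_eq']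
        simp only [Finset.mem_univ, if_true]
        rw [Finset.singleton_inter_of_mem (by simp only [Finset.mem_filter, Finset.mem_univ, true_and]; omega)]
        simp [h]
      · rw [Finset.filter_and, Finset.filter_eq']
        simp only [Finset.mem_univ, if_true]
        rw [Finset.singleton_inter_of_notMem (by simp only [Finset.mem_filter, Finset.mem_univ, true_and]; omega)]
        simp [h]
    · rw [Finset.disjoint_filter]
      rintro k _ ⟨hk, _⟩ ⟨rfl, _⟩
      exact lt_irrefl _ hk
  · ext k
    simp only [Finset.mem_union, Finset.mem_filter, Finset.mem_univ, true_and]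
    constructor
    · rintro ⟨hk, h2⟩
      rcases Nat.lt_succ_iff_lt_or_eq.mp hk with h | h
      · exact Or.inl ⟨h, h2⟩
      · exact Or.inr ⟨Fin.ext h, h2⟩
    · rintro (⟨hk, h2⟩ | ⟨rfl, h2⟩)
      · exact ⟨Nat.lt_succ_of_lt hk, h2⟩
      · exact ⟨Nat.lt_succ_self _, h2⟩

/-- Two permutation matrices are equal iff all their southwest submatrices have
equal ranks. -/
theorem stmt_3 (N : ℕ) (w v : Equiv.Perm (Fin N)) :
    w = v ↔ ∀ i j : ℕ, swRank N w i j = swRank N v i j := by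
  classical
  constructor
  · rintro rfl _ _; rfl
  · intro h
    have key : ∀ (j : Fin N) (t : ℕ), t ≤ N →
        ((t ≤ (w j : ℕ)) ↔ (t ≤ (v j : ℕ))) := by
      intro j t ht
      have h1 := h (N - t) j
      have h2 := h (N - t) ((j : ℕ) + 1)
      rw [swRank_eq_card, swRank_eq_card] at h1 h2
      rw [card_succ, card_succ, h1] at h2
      have h3 := Nat.add_left_cancel h2
      have hNt : N - (N - t) = t := Nat.sub_sub_self ht
      rw [hNt] at h3
      by_cases hw : t ≤ (w j : ℕ) <;> by_cases hv : t ≤ (v j : ℕ) <;>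
        simp [hw, hv] at h3 ⊢
    apply Equiv.ext
    intro j
    apply Fin.ext
    apply le_antisymm
    · exact (key j (w j : ℕ) (le_of_lt (w j).2)).mp le_rfl
    · exact (key j (v j : ℕ) (le_of_lt (v j).2)).mpr le_rfl
end

section
/- Let M be an n×n matrix of nonnegative integers with row sums d_x and column sums d_y (for assignments d to row labels and column labels with matching total N). Then there exists a permutation matrix w ∈ S_N, blocked with block row x of height d_x and block column y of width d_y, such that the number of 1-entries in the (x,y)-block equals M_{x,y}. -/
/-- Start position of the `r`-th consecutive block when the blocks have sizes `e`. -/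
def blkStart (n : ℕ) (e : Fin n → ℕ) (r : Fin n) : ℕ :=
  ∑ r' ∈ Finset.univ.filter (· < r), e r'

/-- The number of `1`-entries of the permutation matrix of `w` lying in the
`(x,y)`-block, when rows are partitioned into consecutive blocks of heights `d`
and columns into consecutive blocks of widths `d'`. -/
def blockCount (n N : ℕ) (d d' : Fin n → ℕ) (w : Equiv.Perm (Fin N)) (x y : Fin n) : ℕ :=
  (Finset.univ.filter fun j : Fin N =>
    (blkStart n d' y ≤ (j : ℕ) ∧ (j : ℕ) < blkStart n d' y + d' y) ∧
    (blkStart n d x ≤ ((w j : Fin N) : ℕ) ∧ ((w j : Fin N) : ℕ) < blkStart n d x + d x)).card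

lemma blkStart_succ_le (n : ℕ) (e : Fin n → ℕ) {r r' : Fin n} (h : r < r') :
    blkStart n e r + e r ≤ blkStart n e r' := by
  unfold blkStart
  have hsub : insert r (Finset.univ.filter (· < r)) ⊆ Finset.univ.filter (· < r') := by
    intro i hi
    simp only [Finset.mem_insert, Finset.mem_filter, Finset.mem_univ, true_and] at hi ⊢
    rcases hi with rfl | hi
    · exact h
    · exact lt_trans hi h
  have hnm : r ∉ Finset.univ.filter (· < r) := by simp
  calc blkStart n e r + e r = ∑ i ∈ insert r (Finset.univ.filter (· < r)), e i := by
        rw [Finset.sum_insert hnm]; unfold blkStart; ring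
    _ ≤ _ := Finset.sum_le_sum_of_subset hsub

lemma blkStart_add_le (n : ℕ) (e : Fin n → ℕ) (r : Fin n) :
    blkStart n e r + e r ≤ ∑ i, e i := by
  have hnm : r ∉ Finset.univ.filter (· < r) := by simp
  calc blkStart n e r + e r = ∑ i ∈ insert r (Finset.univ.filter (· < r)), e i := by
        rw [Finset.sum_insert hnm]; unfold blkStart; ring
    _ ≤ _ := Finset.sum_le_sum_of_subset (Finset.subset_univ _)

lemma blk_unique (n : ℕ) (e : Fin n → ℕ) {r r' : Fin n} {v : ℕ}
    (h : blkStart n e r ≤ v ∧ v < blkStart n e r + e r)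
    (h' : blkStart n e r' ≤ v ∧ v < blkStart n e r' + e r') : r = r' := by
  by_contra hne
  rcases lt_or_gt_of_ne hne with hlt | hlt
  · exact absurd (lt_of_lt_of_le h.2 (le_trans (blkStart_succ_le n e hlt) h'.1)) (lt_irrefl v)
  · exact absurd (lt_of_lt_of_le h'.2 (le_trans (blkStart_succ_le n e hlt) h.1)) (lt_irrefl v)

/-- The underlying map of the block decomposition equivalence. -/
def blkFun (n N : ℕ) (e : Fin n → ℕ) (hN : N = ∑ i, e i)
    (p : Σ r : Fin n, Fin (e r)) : Fin N :=
  ⟨blkStart n e p.1 + (p.2 : ℕ), by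
    rw [hN]
    exact lt_of_lt_of_le (Nat.add_lt_add_left p.2.isLt _) (blkStart_add_le n e p.1)⟩

lemma blkFun_bijective (n N : ℕ) (e : Fin n → ℕ) (hN : N = ∑ i, e i) :
    Function.Bijective (blkFun n N e hN) := by
  constructor
  · rintro ⟨r, k⟩ ⟨r', k'⟩ hpq
    have hv : blkStart n e r + (k : ℕ) = blkStart n e r' + (k' : ℕ) :=
      congrArg Fin.val hpq
    have hr : r = r' := by
      refine blk_unique n e (r := r) (r' := r') (v := blkStart n e r + (k : ℕ))
        ⟨Nat.le_add_right _ _, Nat.add_lt_add_left k.isLt _⟩ ?_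
      rw [hv]
      exact ⟨Nat.le_add_right _ _, Nat.add_lt_add_left k'.isLt _⟩
    subst hr
    have : (k : ℕ) = (k' : ℕ) := by omega
    exact congrArg _ (Fin.ext this)
  · intro j
    have hj : (j : ℕ) < ∑ i, e i := hN ▸ j.isLt
    have hn : 0 < n := by
      rcases Nat.eq_zero_or_pos n with h0 | h0
      · subst h0; simp at hj
      · exact h0
    set S : Finset (Fin n) := Finset.univ.filter (fun r => blkStart n e r ≤ (j : ℕ)) with hS
    have hSne : S.Nonempty := by
      refine ⟨⟨0, hn⟩, ?_⟩
      simp only [hS, Finset.mem_filter, Finset.mem_univ, true_and]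
      have : Finset.univ.filter (· < (⟨0, hn⟩ : Fin n)) = ∅ := by
        ext i; simp [Fin.lt_def]
      unfold blkStart
      rw [this]
      simp
    set r := S.max' hSne with hr
    have hrS : r ∈ S := S.max'_mem hSne
    have hle : blkStart n e r ≤ (j : ℕ) := by
      simpa only [hS, Finset.mem_filter, Finset.mem_univ, true_and] using hrS
    have hlt : (j : ℕ) < blkStart n e r + e r := by
      by_contra hge
      push_neg at hge
      rcases Nat.lt_or_ge (r.val + 1) n with hcase | hcase
      · set r' : Fin n := ⟨r.val + 1, hcase⟩ with hr'
        have hsub : Finset.univ.filter (· < r') ⊆ insert r (Finset.univ.filter (· < r)) := by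
          intro i hi
          simp only [Finset.mem_filter, Finset.mem_univ, true_and, Finset.mem_insert,
            Fin.lt_def] at hi ⊢
          have : i.val ≤ r.val := by
            have : i.val < r.val + 1 := hi
            omega
          rcases Nat.lt_or_ge i.val r.val with h | h
          · exact Or.inr h
          · exact Or.inl (Fin.ext (by omega))
        have hnm : r ∉ Finset.univ.filter (· < r) := by simp
        have hb : blkStart n e r' ≤ blkStart n e r + e r := by
          calc blkStart n e r' ≤ ∑ i ∈ insert r (Finset.univ.filter (· < r)), e i := by
                refine Finset.sum_le_sum_of_subset hsub
            _ = blkStart n e r + e r := by rw [Finset.sum_insert hnm]; unfold blkStart; ring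
        have hr'S : r' ∈ S := by
          simp only [hS, Finset.mem_filter, Finset.mem_univ, true_and]
          omega
        have := S.le_max' r' hr'S
        rw [← hr] at this
        have hlt' : r < r' := by simp [Fin.lt_def, hr']
        exact absurd (lt_of_lt_of_le hlt' this) (lt_irrefl r)
      · have hrtop : r.val + 1 = n := by omega
        have huniv : (Finset.univ : Finset (Fin n)) ⊆ insert r (Finset.univ.filter (· < r)) := by
          intro i _
          simp only [Finset.mem_insert, Finset.mem_filter, Finset.mem_univ, true_and,
            Fin.lt_def]
          have : i.val < n := i.isLt
          rcases Nat.lt_or_ge i.val r.val with h | h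
          · exact Or.inr h
          · exact Or.inl (Fin.ext (by omega))
        have hnm : r ∉ Finset.univ.filter (· < r) := by simp
        have : ∑ i, e i ≤ blkStart n e r + e r := by
          calc ∑ i, e i ≤ ∑ i ∈ insert r (Finset.univ.filter (· < r)), e i :=
                Finset.sum_le_sum_of_subset huniv
            _ = blkStart n e r + e r := by rw [Finset.sum_insert hnm]; unfold blkStart; ring
        omega
    refine ⟨⟨r, ⟨(j : ℕ) - blkStart n e r, by omega⟩⟩, ?_⟩
    apply Fin.ext
    show blkStart n e r + ((j : ℕ) - blkStart n e r) = (j : ℕ)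
    omega

/-- The block decomposition equivalence. -/
noncomputable def blkEquiv (n N : ℕ) (e : Fin n → ℕ) (hN : N = ∑ i, e i) :
    (Σ r : Fin n, Fin (e r)) ≃ Fin N :=
  Equiv.ofBijective (blkFun n N e hN) (blkFun_bijective n N e hN)

lemma blkEquiv_symm_fst (n N : ℕ) (e : Fin n → ℕ) (hN : N = ∑ i, e i)
    (j : Fin N) (r : Fin n) :
    ((blkEquiv n N e hN).symm j).1 = r ↔
      (blkStart n e r ≤ (j : ℕ) ∧ (j : ℕ) < blkStart n e r + e r) := by
  set p := (blkEquiv n N e hN).symm j with hp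
  have happ : blkEquiv n N e hN p = j := by rw [hp]; exact Equiv.apply_symm_apply _ _
  have hv : blkStart n e p.1 + (p.2 : ℕ) = (j : ℕ) := congrArg Fin.val happ
  constructor
  · rintro rfl
    exact ⟨by omega, by have := p.2.isLt; omega⟩
  · intro h
    exact blk_unique n e ⟨by omega, by have := p.2.isLt; omega⟩ h

/-- Existence of a blocked permutation matrix with prescribed block occupancy
matrix `M`, given that `M` has row sums `d` and column sums `d'`. -/
theorem stmt_13 (n N : ℕ) (d d' : Fin n → ℕ) (M : Fin n → Fin n → ℕ)
    (hN : N = ∑ i, d i) (hN' : N = ∑ i, d' i)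
    (hrow : ∀ x, ∑ y, M x y = d x) (hcol : ∀ y, ∑ x, M x y = d' y) :
    ∃ w : Equiv.Perm (Fin N), ∀ x y, blockCount n N d d' w x y = M x y := by
  classical
  let R : Fin N ≃ Σ x : Fin n, Σ y : Fin n, Fin (M x y) :=
    (blkEquiv n N d hN).symm.trans
      (Equiv.sigmaCongrRight fun x =>
        (blkEquiv n (d x) (fun y => M x y) (hrow x).symm).symm)
  let C : Fin N ≃ Σ y : Fin n, Σ x : Fin n, Fin (M x y) :=
    (blkEquiv n N d' hN').symm.trans
      (Equiv.sigmaCongrRight fun y =>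
        (blkEquiv n (d' y) (fun x => M x y) (hcol y).symm).symm)
  let sw : (Σ x : Fin n, Σ y : Fin n, Fin (M x y)) ≃ (Σ y : Fin n, Σ x : Fin n, Fin (M x y)) :=
    ⟨fun p => ⟨p.2.1, p.1, p.2.2⟩, fun p => ⟨p.2.1, p.1, p.2.2⟩,
      fun p => rfl, fun p => rfl⟩
  refine ⟨C.trans (sw.symm.trans R.symm), ?_⟩
  intro x y
  set w : Equiv.Perm (Fin N) := C.trans (sw.symm.trans R.symm) with hw
  have hRfst : ∀ j : Fin N, (R j).1 = ((blkEquiv n N d hN).symm j).1 := by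
    intro j
    show (Equiv.sigmaCongrRight
      (fun x => (blkEquiv n (d x) (fun y => M x y) (hrow x).symm).symm)
      ((blkEquiv n N d hN).symm j)).1 = ((blkEquiv n N d hN).symm j).1
    rcases (blkEquiv n N d hN).symm j with ⟨a, b⟩
    rfl
  have hCfst : ∀ j : Fin N, (C j).1 = ((blkEquiv n N d' hN').symm j).1 := by
    intro j
    show (Equiv.sigmaCongrRight
      (fun y => (blkEquiv n (d' y) (fun x => M x y) (hcol y).symm).symm)
      ((blkEquiv n N d' hN').symm j)).1 = ((blkEquiv n N d' hN').symm j).1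
    rcases (blkEquiv n N d' hN').symm j with ⟨a, b⟩
    rfl
  have hRw : ∀ j : Fin N, R (w j) = sw.symm (C j) := by
    intro j
    show R (R.symm (sw.symm (C j))) = sw.symm (C j)
    exact Equiv.apply_symm_apply _ _
  have hswfst : ∀ t : Σ y : Fin n, Σ x : Fin n, Fin (M x y), (sw.symm t).1 = t.2.1 := by
    rintro ⟨a, b, c⟩; rfl
  have hcond : ∀ j : Fin N,
      (((blkStart n d' y ≤ (j : ℕ) ∧ (j : ℕ) < blkStart n d' y + d' y) ∧
        (blkStart n d x ≤ ((w j : Fin N) : ℕ) ∧ ((w j : Fin N) : ℕ) < blkStart n d x + d x))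
        ↔ ((C j).1 = y ∧ (C j).2.1 = x)) := by
    intro j
    rw [← blkEquiv_symm_fst n N d' hN' j y, ← blkEquiv_symm_fst n N d hN (w j) x,
      ← hCfst j, ← hRfst (w j), hRw j, hswfst]
  unfold blockCount
  rw [Finset.filter_congr (fun j _ => hcond j)]
  -- count via the bijection C
  have hbij : (Finset.univ.filter fun j : Fin N => (C j).1 = y ∧ (C j).2.1 = x).card =
      (Finset.univ.filter fun t : Σ y : Fin n, Σ x : Fin n, Fin (M x y) =>
        t.1 = y ∧ t.2.1 = x).card := by
    refine Finset.card_bij (fun j _ => C j) ?_ ?_ ?_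
    · intro j hj
      simp only [Finset.mem_filter, Finset.mem_univ, true_and] at hj ⊢
      exact hj
    · intro a _ b _ hab
      exact C.injective hab
    · intro t ht
      refine ⟨C.symm t, ?_, Equiv.apply_symm_apply _ _⟩
      simp only [Finset.mem_filter, Finset.mem_univ, true_and] at ht ⊢
      rw [Equiv.apply_symm_apply]
      exact ht
  rw [hbij]
  have hmap : (Finset.univ.filter fun t : Σ y : Fin n, Σ x : Fin n, Fin (M x y) =>
      t.1 = y ∧ t.2.1 = x) =
      (Finset.univ : Finset (Fin (M x y))).map
        ⟨fun k => ⟨y, x, k⟩, by intro a b hab; simpa using hab⟩ := by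
    ext t
    simp only [Finset.mem_filter, Finset.mem_univ, true_and, Finset.mem_map,
      Function.Embedding.coeFn_mk]
    constructor
    · rintro ⟨h1, h2⟩
      obtain ⟨y', x', k⟩ := t
      dsimp at h1 h2
      subst h1; subst h2
      exact ⟨k, rfl⟩
    · rintro ⟨k, rfl⟩
      exact ⟨rfl, rfl⟩
  rw [hmap, Finset.card_map, Finset.card_univ, Fintype.card_fin]
end

section
/- Let M be an n×n matrix of nonnegative integers with prescribed block row sums d_x and block column sums d_y summing to N. Among all N×N permutation matrices whose block occupancy matrix equals M, there is exactly one in which the 1-entries within each block form an identity submatrix, within each block row these identity submatrices are arranged from southwest to northeast, and within each block column they are arranged from northwest to southeast (the 'Z-type' permutation). -/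
/-- The set of column indices `j` whose `1`-entry `(w j, j)` lies in the
`(x,y)`-block, for the blocking with row heights `d` and column widths `d'`. -/
def blockSet (n N : ℕ) (d d' : Fin n → ℕ) (w : Equiv.Perm (Fin N)) (x y : Fin n) :
    Finset (Fin N) :=
  Finset.univ.filter fun j : Fin N =>
    (blkStart n d' y ≤ (j : ℕ) ∧ (j : ℕ) < blkStart n d' y + d' y) ∧
    (blkStart n d x ≤ ((w j : Fin N) : ℕ) ∧ ((w j : Fin N) : ℕ) < blkStart n d x + d x)

/-- `w` is of Z-type: within each block the `1`-entries form an identity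
submatrix (consecutive columns, with row offsets matching column offsets);
within each block row the identity submatrices are arranged from southwest to
northeast; within each block column they are arranged from northwest to
southeast. -/
def IsZType (n N : ℕ) (d d' : Fin n → ℕ) (w : Equiv.Perm (Fin N)) : Prop :=
  (∀ x y, ∀ j₁ ∈ blockSet n N d d' w x y, ∀ j₂ ∈ blockSet n N d d' w x y,
      (j₁ : ℕ) ≤ (j₂ : ℕ) →
        ((w j₂ : Fin N) : ℕ) - ((w j₁ : Fin N) : ℕ) = (j₂ : ℕ) - (j₁ : ℕ) ∧
        ∀ j : Fin N, (j₁ : ℕ) ≤ (j : ℕ) → (j : ℕ) ≤ (j₂ : ℕ) →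
          j ∈ blockSet n N d d' w x y) ∧
  (∀ x y₁ y₂, y₁ < y₂ → ∀ j₁ ∈ blockSet n N d d' w x y₁, ∀ j₂ ∈ blockSet n N d d' w x y₂,
      ((w j₂ : Fin N) : ℕ) < ((w j₁ : Fin N) : ℕ)) ∧
  (∀ x₁ x₂ y, x₁ < x₂ → ∀ j₁ ∈ blockSet n N d d' w x₁ y, ∀ j₂ ∈ blockSet n N d d' w x₂ y,
      (j₁ : ℕ) < (j₂ : ℕ))

section ZHelpers

open Finset

namespace ZP

/-- Sum of block sizes after block `r`. -/
def aft (n : ℕ) (e : Fin n → ℕ) (r : Fin n) : ℕ :=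
  ∑ r' ∈ Finset.univ.filter (r < ·), e r'

variable {n : ℕ} {e : Fin n → ℕ}

lemma blkStart_add_le {r s : Fin n} (h : r < s) :
    blkStart n e r + e r ≤ blkStart n e s := by
  have hins : insert r (univ.filter (· < r)) ⊆ univ.filter (· < s) := by
    intro a ha
    simp only [mem_insert, mem_filter, mem_univ, true_and] at ha ⊢
    rcases ha with rfl | ha
    · exact h
    · exact ha.trans h
  have hr : r ∉ univ.filter (· < r) := by simp
  have hle := Finset.sum_le_sum_of_subset (f := e) hins
  rw [Finset.sum_insert hr] at hle
  unfold blkStart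
  omega

lemma aft_add_le {r s : Fin n} (h : r < s) :
    aft n e s + e s ≤ aft n e r := by
  have hins : insert s (univ.filter (s < ·)) ⊆ univ.filter (r < ·) := by
    intro a ha
    simp only [mem_insert, mem_filter, mem_univ, true_and] at ha ⊢
    rcases ha with rfl | ha
    · exact h
    · exact h.trans ha
  have hs : s ∉ univ.filter (s < ·) := by simp
  have hle := Finset.sum_le_sum_of_subset (f := e) hins
  rw [Finset.sum_insert hs] at hle
  unfold aft
  omega

lemma sum_split (r : Fin n) :
    ∑ i, e i = blkStart n e r + e r + aft n e r := by
  classical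
  rw [← Finset.sum_filter_add_sum_filter_not univ (· < r) e]
  have h2 : univ.filter (fun a : Fin n => ¬ a < r) = insert r (univ.filter (r < ·)) := by
    ext a
    simp only [mem_filter, mem_univ, true_and, mem_insert, not_lt, Fin.lt_def, Fin.le_def,
      Fin.ext_iff]
    omega
  rw [h2, Finset.sum_insert (by simp)]
  unfold blkStart aft
  ring

lemma blkStart_add_le_sum (r : Fin n) : blkStart n e r + e r ≤ ∑ i, e i := by
  have := sum_split (e := e) r; omega

lemma aft_add_le_sum (r : Fin n) : aft n e r + e r ≤ ∑ i, e i := by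
  have := sum_split (e := e) r; omega

lemma blkStart_unique {r s : Fin n} {j : ℕ}
    (hr₁ : blkStart n e r ≤ j) (hr₂ : j < blkStart n e r + e r)
    (hs₁ : blkStart n e s ≤ j) (hs₂ : j < blkStart n e s + e s) : r = s := by
  by_contra hne
  rcases lt_or_gt_of_ne hne with h | h
  · have := blkStart_add_le (e := e) h; omega
  · have := blkStart_add_le (e := e) h; omega

lemma aft_unique {r s : Fin n} {j : ℕ}
    (hr₁ : aft n e r ≤ j) (hr₂ : j < aft n e r + e r)
    (hs₁ : aft n e s ≤ j) (hs₂ : j < aft n e s + e s) : r = s := by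
  by_contra hne
  rcases lt_or_gt_of_ne hne with h | h
  · have := aft_add_le (e := e) h; omega
  · have := aft_add_le (e := e) h; omega

lemma blkStart_succ (r : Fin n) (h : r.val + 1 < n) :
    blkStart n e ⟨r.val + 1, h⟩ = blkStart n e r + e r := by
  unfold blkStart
  have h2 : univ.filter (· < (⟨r.val + 1, h⟩ : Fin n)) = insert r (univ.filter (· < r)) := by
    ext a
    simp only [mem_filter, mem_univ, true_and, mem_insert, Fin.lt_def, Fin.ext_iff]
    omega
  rw [h2, Finset.sum_insert (by simp)]
  ring

lemma exists_block {j : ℕ} (hj : j < ∑ i, e i) :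
    ∃ r : Fin n, blkStart n e r ≤ j ∧ j < blkStart n e r + e r := by
  have hn : 0 < n := by
    rcases Nat.eq_zero_or_pos n with h | h
    · subst h; simp at hj
    · exact h
  classical
  set F := univ.filter (fun r : Fin n => blkStart n e r ≤ j) with hF
  have hne : F.Nonempty := by
    refine ⟨⟨0, hn⟩, ?_⟩
    simp only [hF, mem_filter, mem_univ, true_and]
    have : univ.filter (· < (⟨0, hn⟩ : Fin n)) = ∅ := by
      apply Finset.filter_false_of_mem
      intro a _
      simp [Fin.lt_def]
    unfold blkStart
    rw [this, Finset.sum_empty]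
    omega
  set r := F.max' hne with hrdef
  have hrmem : r ∈ F := F.max'_mem hne
  have hr1 : blkStart n e r ≤ j := by
    simpa [hF] using hrmem
  refine ⟨r, hr1, ?_⟩
  by_contra hcon
  push_neg at hcon
  rcases Nat.lt_or_ge (r.val + 1) n with h | h
  · set r' : Fin n := ⟨r.val + 1, h⟩ with hr'
    have hmem' : r' ∈ F := by
      simp only [hF, mem_filter, mem_univ, true_and]
      rw [blkStart_succ r h]
      omega
    have := F.le_max' r' hmem'
    rw [← hrdef] at this
    have : r'.val ≤ r.val := this
    simp [hr'] at this
  · have hlast : aft n e r = 0 := by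
      unfold aft
      have : univ.filter (r < ·) = ∅ := by
        apply Finset.filter_false_of_mem
        intro a _
        simp only [Fin.lt_def, not_lt]
        omega
      rw [this, Finset.sum_empty]
    have := sum_split (e := e) r
    omega

lemma card_interval {N : ℕ} (a b : ℕ) (hb : b ≤ N) :
    (univ.filter fun j : Fin N => a ≤ (j : ℕ) ∧ (j : ℕ) < b).card = b - a := by
  have h : (univ.filter fun j : Fin N => a ≤ (j : ℕ) ∧ (j : ℕ) < b) =
      (Finset.Ico a b).attachFin
        (fun m hm => lt_of_lt_of_le (Finset.mem_Ico.mp hm).2 hb) := by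
    ext j
    simp [Finset.mem_attachFin, Finset.mem_Ico]
  rw [h, Finset.card_attachFin, Nat.card_Ico]

end ZP

open ZP Finset

variable (n N : ℕ) (d d' : Fin n → ℕ) (M : Fin n → Fin n → ℕ)

/-- The column position of the `k`-th entry of block `(x,y)` of the Z-type permutation. -/
def colF (hN' : N = ∑ i, d' i) (hcol : ∀ y, ∑ x, M x y = d' y)
    (t : (x : Fin n) × (y : Fin n) × Fin (M x y)) : Fin N :=
  ⟨blkStart n d' t.2.1 + blkStart n (fun x' => M x' t.2.1) t.1 + (t.2.2 : ℕ), by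
    have h1 := ZP.blkStart_add_le_sum (e := fun x' => M x' t.2.1) t.1
    have h2 := ZP.blkStart_add_le_sum (e := d') t.2.1
    have h3 := hcol t.2.1
    have h4 := t.2.2.isLt
    omega⟩

/-- The row position of the `k`-th entry of block `(x,y)` of the Z-type permutation. -/
def rowF (hN : N = ∑ i, d i) (hrow : ∀ x, ∑ y, M x y = d x)
    (t : (x : Fin n) × (y : Fin n) × Fin (M x y)) : Fin N :=
  ⟨blkStart n d t.1 + aft n (fun y' => M t.1 y') t.2.1 + (t.2.2 : ℕ), by
    have h1 := ZP.aft_add_le_sum (e := fun y' => M t.1 y') t.2.1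
    have h2 := ZP.blkStart_add_le_sum (e := d) t.1
    have h3 := hrow t.1
    have h4 := t.2.2.isLt
    omega⟩

lemma colF_inj (hN' : N = ∑ i, d' i) (hcol : ∀ y, ∑ x, M x y = d' y) :
    Function.Injective (colF n N d' M hN' hcol) := by
  rintro ⟨x₁, y₁, k₁⟩ ⟨x₂, y₂, k₂⟩ h
  have hv : blkStart n d' y₁ + blkStart n (fun x' => M x' y₁) x₁ + (k₁ : ℕ)
      = blkStart n d' y₂ + blkStart n (fun x' => M x' y₂) x₂ + (k₂ : ℕ) := by
    simpa [colF, Fin.ext_iff] using h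
  have hb₁ := ZP.blkStart_add_le_sum (e := fun x' => M x' y₁) x₁
  have hb₂ := ZP.blkStart_add_le_sum (e := fun x' => M x' y₂) x₂
  rw [hcol y₁] at hb₁; rw [hcol y₂] at hb₂
  have hk₁ := k₁.isLt; have hk₂ := k₂.isLt
  have hy : y₁ = y₂ := by
    refine ZP.blkStart_unique (e := d')
      (j := blkStart n d' y₁ + blkStart n (fun x' => M x' y₁) x₁ + (k₁ : ℕ))
      (by omega) (by omega) (by omega) (by omega)
  subst hy
  have hx : x₁ = x₂ := by
    refine ZP.blkStart_unique (e := fun x' => M x' y₁)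
      (j := blkStart n (fun x' => M x' y₁) x₁ + (k₁ : ℕ))
      (by beta_reduce; omega) (by beta_reduce; omega) (by beta_reduce; omega)
      (by beta_reduce; omega)
  subst hx
  have hk : k₁ = k₂ := Fin.ext (by omega)
  subst hk
  rfl

lemma rowF_inj (hN : N = ∑ i, d i) (hrow : ∀ x, ∑ y, M x y = d x) :
    Function.Injective (rowF n N d M hN hrow) := by
  rintro ⟨x₁, y₁, k₁⟩ ⟨x₂, y₂, k₂⟩ h
  have hv : blkStart n d x₁ + aft n (fun y' => M x₁ y') y₁ + (k₁ : ℕ)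
      = blkStart n d x₂ + aft n (fun y' => M x₂ y') y₂ + (k₂ : ℕ) := by
    simpa [rowF, Fin.ext_iff] using h
  have hb₁ := ZP.aft_add_le_sum (e := fun y' => M x₁ y') y₁
  have hb₂ := ZP.aft_add_le_sum (e := fun y' => M x₂ y') y₂
  rw [hrow x₁] at hb₁; rw [hrow x₂] at hb₂
  have hk₁ := k₁.isLt; have hk₂ := k₂.isLt
  have hx : x₁ = x₂ := by
    refine ZP.blkStart_unique (e := d)
      (j := blkStart n d x₁ + aft n (fun y' => M x₁ y') y₁ + (k₁ : ℕ))
      (by omega) (by omega) (by omega) (by omega)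
  subst hx
  have hy : y₁ = y₂ := by
    refine ZP.aft_unique (e := fun y' => M x₁ y')
      (j := aft n (fun y' => M x₁ y') y₁ + (k₁ : ℕ))
      (by beta_reduce; omega) (by beta_reduce; omega) (by beta_reduce; omega)
      (by beta_reduce; omega)
  subst hy
  have hk : k₁ = k₂ := Fin.ext (by omega)
  subst hk
  rfl

lemma card_T (hN : N = ∑ i, d i) (hrow : ∀ x, ∑ y, M x y = d x) :
    Fintype.card ((x : Fin n) × (y : Fin n) × Fin (M x y)) = Fintype.card (Fin N) := by
  simp only [Fintype.card_sigma, Fintype.card_fin]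
  rw [Finset.sum_congr rfl (fun x _ => hrow x)]
  exact hN.symm

/-- The bijective enumeration of entries by column. -/
noncomputable def colE (hN : N = ∑ i, d i) (hN' : N = ∑ i, d' i)
    (hrow : ∀ x, ∑ y, M x y = d x) (hcol : ∀ y, ∑ x, M x y = d' y) :
    ((x : Fin n) × (y : Fin n) × Fin (M x y)) ≃ Fin N :=
  Equiv.ofBijective (colF n N d' M hN' hcol)
    ((Fintype.bijective_iff_injective_and_card _).mpr
      ⟨colF_inj n N d' M hN' hcol, card_T n N d M hN hrow⟩)

/-- The bijective enumeration of entries by row. -/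
noncomputable def rowE (hN : N = ∑ i, d i) (hrow : ∀ x, ∑ y, M x y = d x) :
    ((x : Fin n) × (y : Fin n) × Fin (M x y)) ≃ Fin N :=
  Equiv.ofBijective (rowF n N d M hN hrow)
    ((Fintype.bijective_iff_injective_and_card _).mpr
      ⟨rowF_inj n N d M hN hrow, card_T n N d M hN hrow⟩)

/-- The Z-type permutation. -/
noncomputable def zPerm (hN : N = ∑ i, d i) (hN' : N = ∑ i, d' i)
    (hrow : ∀ x, ∑ y, M x y = d x) (hcol : ∀ y, ∑ x, M x y = d' y) :
    Equiv.Perm (Fin N) :=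
  (colE n N d d' M hN hN' hrow hcol).symm.trans (rowE n N d M hN hrow)

variable (hN : N = ∑ i, d i) (hN' : N = ∑ i, d' i)
    (hrow : ∀ x, ∑ y, M x y = d x) (hcol : ∀ y, ∑ x, M x y = d' y)

lemma zPerm_colF (t : (x : Fin n) × (y : Fin n) × Fin (M x y)) :
    zPerm n N d d' M hN hN' hrow hcol (colF n N d' M hN' hcol t)
      = rowF n N d M hN hrow t := by
  have h : (colE n N d d' M hN hN' hrow hcol).symm (colF n N d' M hN' hcol t) = t := by
    apply (colE n N d d' M hN hN' hrow hcol).injective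
    rw [Equiv.apply_symm_apply]
    rfl
  simp only [zPerm, Equiv.trans_apply, h]
  rfl

include hN hrow in
lemma colF_surj (j : Fin N) : ∃ t, colF n N d' M hN' hcol t = j :=
  ⟨(colE n N d d' M hN hN' hrow hcol).symm j,
    (colE n N d d' M hN hN' hrow hcol).apply_symm_apply j⟩

lemma mem_blockSet_iff (w : Equiv.Perm (Fin N)) (x y : Fin n) (j : Fin N) :
    j ∈ blockSet n N d d' w x y ↔
      ((blkStart n d' y ≤ (j : ℕ) ∧ (j : ℕ) < blkStart n d' y + d' y) ∧
       (blkStart n d x ≤ ((w j : Fin N) : ℕ) ∧ ((w j : Fin N) : ℕ) < blkStart n d x + d x)) := by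
  simp [blockSet]

lemma colF_mem_blockSet_iff (t : (x : Fin n) × (y : Fin n) × Fin (M x y)) (x y : Fin n) :
    colF n N d' M hN' hcol t ∈ blockSet n N d d' (zPerm n N d d' M hN hN' hrow hcol) x y ↔
      t.1 = x ∧ t.2.1 = y := by
  obtain ⟨x₀, y₀, k⟩ := t
  rw [mem_blockSet_iff, zPerm_colF]
  show _ ↔ x₀ = x ∧ y₀ = y
  have hcval : ((colF n N d' M hN' hcol ⟨x₀, y₀, k⟩ : Fin N) : ℕ)
      = blkStart n d' y₀ + blkStart n (fun x' => M x' y₀) x₀ + (k : ℕ) := rfl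
  have hrval : ((rowF n N d M hN hrow ⟨x₀, y₀, k⟩ : Fin N) : ℕ)
      = blkStart n d x₀ + aft n (fun y' => M x₀ y') y₀ + (k : ℕ) := rfl
  have hb₁ := ZP.blkStart_add_le_sum (e := fun x' => M x' y₀) x₀
  rw [hcol y₀] at hb₁
  have hb₂ := ZP.aft_add_le_sum (e := fun y' => M x₀ y') y₀
  rw [hrow x₀] at hb₂
  have hk := k.isLt
  constructor
  · rintro ⟨⟨h1, h2⟩, ⟨h3, h4⟩⟩
    rw [hcval] at h1 h2
    rw [hrval] at h3 h4
    constructor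
    · exact (ZP.blkStart_unique (e := d)
        (j := blkStart n d x₀ + aft n (fun y' => M x₀ y') y₀ + (k : ℕ))
        (by omega) (by omega) (by omega) (by omega))
    · exact (ZP.blkStart_unique (e := d')
        (j := blkStart n d' y₀ + blkStart n (fun x' => M x' y₀) x₀ + (k : ℕ))
        (by omega) (by omega) (by omega) (by omega))
  · rintro ⟨rfl, rfl⟩
    rw [hcval, hrval]
    omega

lemma card_blockSet (x y : Fin n) :
    (blockSet n N d d' (zPerm n N d d' M hN hN' hrow hcol) x y).card = M x y := by
  have himg : blockSet n N d d' (zPerm n N d d' M hN hN' hrow hcol) x y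
      = Finset.image (fun k : Fin (M x y) => colF n N d' M hN' hcol ⟨x, y, k⟩) univ := by
    ext j
    simp only [Finset.mem_image, mem_univ, true_and]
    constructor
    · intro hj
      obtain ⟨t, rfl⟩ := colF_surj n N d d' M hN hN' hrow hcol j
      obtain ⟨hx, hy⟩ := (colF_mem_blockSet_iff n N d d' M hN hN' hrow hcol t x y).mp hj
      obtain ⟨x₀, y₀, k⟩ := t
      have hx' : x₀ = x := hx
      have hy' : y₀ = y := hy
      subst hx'; subst hy'
      exact ⟨k, rfl⟩
    · rintro ⟨k, rfl⟩
      exact (colF_mem_blockSet_iff n N d d' M hN hN' hrow hcol ⟨x, y, k⟩ x y).mpr ⟨rfl, rfl⟩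
  rw [himg, Finset.card_image_of_injective _ ?_, Finset.card_univ, Fintype.card_fin]
  intro k₁ k₂ h
  have := congrArg (fun j : Fin N => (j : ℕ)) h
  simp only [colF] at this
  exact Fin.ext (by omega)

lemma zPerm_isZ : IsZType n N d d' (zPerm n N d d' M hN hN' hrow hcol) := by
  set w := zPerm n N d d' M hN hN' hrow hcol with hw
  have hmem := colF_mem_blockSet_iff n N d d' M hN hN' hrow hcol
  refine ⟨?_, ?_, ?_⟩
  · intro x y j₁ h₁ j₂ h₂ hle
    obtain ⟨t₁, rfl⟩ := colF_surj n N d d' M hN hN' hrow hcol j₁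
    obtain ⟨t₂, rfl⟩ := colF_surj n N d d' M hN hN' hrow hcol j₂
    obtain ⟨hx₁, hy₁⟩ := (hmem t₁ x y).mp h₁
    obtain ⟨hx₂, hy₂⟩ := (hmem t₂ x y).mp h₂
    obtain ⟨x₁, y₁, k₁⟩ := t₁
    obtain ⟨x₂, y₂, k₂⟩ := t₂
    have hx₁' : x = x₁ := hx₁.symm; have hy₁' : y = y₁ := hy₁.symm
    have hx₂' : x = x₂ := hx₂.symm; have hy₂' : y = y₂ := hy₂.symm
    subst hx₁'; subst hy₁'; subst hx₂'; subst hy₂'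
    rw [hw, zPerm_colF, zPerm_colF]
    have hv₁ : ((colF n N d' M hN' hcol ⟨x, y, k₁⟩ : Fin N) : ℕ)
        = blkStart n d' y + blkStart n (fun x' => M x' y) x + (k₁ : ℕ) := rfl
    have hv₂ : ((colF n N d' M hN' hcol ⟨x, y, k₂⟩ : Fin N) : ℕ)
        = blkStart n d' y + blkStart n (fun x' => M x' y) x + (k₂ : ℕ) := rfl
    have hr₁ : ((rowF n N d M hN hrow ⟨x, y, k₁⟩ : Fin N) : ℕ)
        = blkStart n d x + aft n (fun y' => M x y') y + (k₁ : ℕ) := rfl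
    have hr₂ : ((rowF n N d M hN hrow ⟨x, y, k₂⟩ : Fin N) : ℕ)
        = blkStart n d x + aft n (fun y' => M x y') y + (k₂ : ℕ) := rfl
    constructor
    · rw [hv₁, hv₂] at hle ⊢
      rw [hr₁, hr₂]
      omega
    · intro j hj₁ hj₂
      rw [hv₁] at hj₁
      rw [hv₂] at hj₂
      have hk₂ := k₂.isLt
      have hjlt : (j : ℕ) - (blkStart n d' y + blkStart n (fun x' => M x' y) x) < M x y := by
        omega
      have hj : j = colF n N d' M hN' hcol
          ⟨x, y, ⟨(j : ℕ) - (blkStart n d' y + blkStart n (fun x' => M x' y) x), hjlt⟩⟩ := by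
        apply Fin.ext
        show (j : ℕ) = blkStart n d' y + blkStart n (fun x' => M x' y) x +
          ((j : ℕ) - (blkStart n d' y + blkStart n (fun x' => M x' y) x))
        omega
      rw [hj]
      exact (hmem _ x y).mpr ⟨rfl, rfl⟩
  · intro x y₁ y₂ hlt j₁ h₁ j₂ h₂
    obtain ⟨t₁, rfl⟩ := colF_surj n N d d' M hN hN' hrow hcol j₁
    obtain ⟨t₂, rfl⟩ := colF_surj n N d d' M hN hN' hrow hcol j₂
    obtain ⟨hx₁, hy₁⟩ := (hmem t₁ x y₁).mp h₁
    obtain ⟨hx₂, hy₂⟩ := (hmem t₂ x y₂).mp h₂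
    obtain ⟨x₁, yy₁, k₁⟩ := t₁
    obtain ⟨x₂, yy₂, k₂⟩ := t₂
    have hx₁' : x = x₁ := hx₁.symm; have hy₁' : y₁ = yy₁ := hy₁.symm
    have hx₂' : x = x₂ := hx₂.symm; have hy₂' : y₂ = yy₂ := hy₂.symm
    subst hx₁'; subst hy₁'; subst hx₂'; subst hy₂'
    rw [hw, zPerm_colF, zPerm_colF]
    show blkStart n d x + aft n (fun y' => M x y') y₂ + (k₂ : ℕ)
        < blkStart n d x + aft n (fun y' => M x y') y₁ + (k₁ : ℕ)
    have hsec := ZP.aft_add_le (e := fun y' => M x y') hlt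
    have hk₂ := k₂.isLt
    beta_reduce at hsec
    omega
  · intro x₁ x₂ y hlt j₁ h₁ j₂ h₂
    obtain ⟨t₁, rfl⟩ := colF_surj n N d d' M hN hN' hrow hcol j₁
    obtain ⟨t₂, rfl⟩ := colF_surj n N d d' M hN hN' hrow hcol j₂
    obtain ⟨hx₁, hy₁⟩ := (hmem t₁ x₁ y).mp h₁
    obtain ⟨hx₂, hy₂⟩ := (hmem t₂ x₂ y).mp h₂
    obtain ⟨xx₁, y₁, k₁⟩ := t₁
    obtain ⟨xx₂, y₂, k₂⟩ := t₂
    have hx₁' : x₁ = xx₁ := hx₁.symm; have hy₁' : y = y₁ := hy₁.symm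
    have hx₂' : x₂ = xx₂ := hx₂.symm; have hy₂' : y = y₂ := hy₂.symm
    subst hx₁'; subst hy₁'; subst hx₂'; subst hy₂'
    show blkStart n d' y + blkStart n (fun x' => M x' y) x₁ + (k₁ : ℕ)
        < blkStart n d' y + blkStart n (fun x' => M x' y) x₂ + (k₂ : ℕ)
    have hsec := ZP.blkStart_add_le (e := fun x' => M x' y) hlt
    have hk₁ := k₁.isLt
    beta_reduce at hsec
    omega

lemma uniq (w' : Equiv.Perm (Fin N))
    (hcard : ∀ x y, (blockSet n N d d' w' x y).card = M x y)
    (hz : IsZType n N d d' w') :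
    w' = zPerm n N d d' M hN hN' hrow hcol := by
  classical
  -- disjointness of block sets in the same block column / row
  have hdisjR : ∀ (y x₁ x₂ : Fin n), x₁ ≠ x₂ →
      Disjoint (blockSet n N d d' w' x₁ y) (blockSet n N d d' w' x₂ y) := by
    intro y x₁ x₂ hne
    rw [Finset.disjoint_left]
    intro j h1 h2
    rw [mem_blockSet_iff] at h1 h2
    exact hne (ZP.blkStart_unique (e := d) (j := ((w' j : Fin N) : ℕ))
      h1.2.1 h1.2.2 h2.2.1 h2.2.2)
  have hdisjC : ∀ (x y₁ y₂ : Fin n), y₁ ≠ y₂ →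
      Disjoint (blockSet n N d d' w' x y₁) (blockSet n N d d' w' x y₂) := by
    intro x y₁ y₂ hne
    rw [Finset.disjoint_left]
    intro j h1 h2
    rw [mem_blockSet_iff] at h1 h2
    exact hne (ZP.blkStart_unique (e := d') (j := (j : ℕ)) h1.1.1 h1.1.2 h2.1.1 h2.1.2)
  -- forward column bounds
  have hfwdCol : ∀ (x y : Fin n) (j : Fin N), j ∈ blockSet n N d d' w' x y →
      blkStart n d' y + blkStart n (fun x' => M x' y) x ≤ (j : ℕ) ∧
      (j : ℕ) < blkStart n d' y + blkStart n (fun x' => M x' y) x + M x y := by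
    intro x y j hj
    have hjc := ((mem_blockSet_iff n N d d' w' x y j).mp hj).1
    -- the blocks to the left
    have hL : ((univ.filter (· < x)).biUnion
        (fun x' => blockSet n N d d' w' x' y)).card = blkStart n (fun x' => M x' y) x := by
      rw [Finset.card_biUnion (fun a _ b _ hab => hdisjR y a b hab)]
      exact Finset.sum_congr rfl fun x' _ => hcard x' y
    have hLsub : (univ.filter (· < x)).biUnion (fun x' => blockSet n N d d' w' x' y)
        ⊆ univ.filter (fun j' : Fin N => blkStart n d' y ≤ (j' : ℕ) ∧ (j' : ℕ) < (j : ℕ)) := by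
      intro j' hj'
      rw [Finset.mem_biUnion] at hj'
      obtain ⟨x', hx', hm⟩ := hj'
      rw [mem_filter] at hx'
      rw [mem_filter]
      exact ⟨mem_univ _, ((mem_blockSet_iff n N d d' w' x' y j').mp hm).1.1,
        hz.2.2 x' x y hx'.2 j' hm j hj⟩
    have hLle := Finset.card_le_card hLsub
    rw [hL, ZP.card_interval _ _ (le_of_lt j.isLt)] at hLle
    -- the blocks to the right
    have hG : ((univ.filter (x < ·)).biUnion
        (fun x' => blockSet n N d d' w' x' y)).card = aft n (fun x' => M x' y) x := by
      rw [Finset.card_biUnion (fun a _ b _ hab => hdisjR y a b hab)]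
      exact Finset.sum_congr rfl fun x' _ => hcard x' y
    have hGsub : (univ.filter (x < ·)).biUnion (fun x' => blockSet n N d d' w' x' y)
        ⊆ univ.filter (fun j' : Fin N => (j : ℕ) + 1 ≤ (j' : ℕ) ∧
            (j' : ℕ) < blkStart n d' y + d' y) := by
      intro j' hj'
      rw [Finset.mem_biUnion] at hj'
      obtain ⟨x', hx', hm⟩ := hj'
      rw [mem_filter] at hx'
      rw [mem_filter]
      exact ⟨mem_univ _, hz.2.2 x x' y hx'.2 j hj j' hm,
        ((mem_blockSet_iff n N d d' w' x' y j').mp hm).1.2⟩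
    have hGle := Finset.card_le_card hGsub
    have hbd : blkStart n d' y + d' y ≤ N := by
      have := ZP.blkStart_add_le_sum (e := d') y; omega
    rw [hG, ZP.card_interval _ _ hbd] at hGle
    have hsplit := ZP.sum_split (e := fun x' => M x' y) x
    rw [hcol y] at hsplit
    beta_reduce at hsplit
    omega
  -- column characterization
  have hU1 : ∀ (x y : Fin n) (j : Fin N),
      j ∈ blockSet n N d d' w' x y ↔
        (blkStart n d' y + blkStart n (fun x' => M x' y) x ≤ (j : ℕ) ∧
         (j : ℕ) < blkStart n d' y + blkStart n (fun x' => M x' y) x + M x y) := by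
    intro x y j
    refine ⟨hfwdCol x y j, fun hb => ?_⟩
    have hjN : ((w' j : Fin N) : ℕ) < ∑ i, d i := by
      have := (w' j).isLt; omega
    obtain ⟨x'', hx1, hx2⟩ := ZP.exists_block (e := d) hjN
    have hjc : blkStart n d' y ≤ (j : ℕ) ∧ (j : ℕ) < blkStart n d' y + d' y := by
      have h1 := ZP.blkStart_add_le_sum (e := fun x' => M x' y) x
      rw [hcol y] at h1
      beta_reduce at h1
      omega
    have hmem : j ∈ blockSet n N d d' w' x'' y :=
      (mem_blockSet_iff n N d d' w' x'' y j).mpr ⟨hjc, hx1, hx2⟩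
    have hb2 := hfwdCol x'' y j hmem
    have hxx : x'' = x := by
      refine ZP.blkStart_unique (e := fun x' => M x' y)
        (j := (j : ℕ) - blkStart n d' y) ?_ ?_ ?_ ?_ <;> beta_reduce <;> omega
    subst hxx
    exact hmem
  -- forward row bounds
  have hfwdRow : ∀ (x y : Fin n) (j : Fin N), j ∈ blockSet n N d d' w' x y →
      blkStart n d x + aft n (fun y' => M x y') y ≤ ((w' j : Fin N) : ℕ) ∧
      ((w' j : Fin N) : ℕ) < blkStart n d x + aft n (fun y' => M x y') y + M x y := by
    intro x y j hj
    have hjr := ((mem_blockSet_iff n N d d' w' x y j).mp hj).2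
    -- blocks with larger y (rows above)
    have hL : (((univ.filter (y < ·)).biUnion
        (fun y'' => blockSet n N d d' w' x y'')).image w').card
        = aft n (fun y' => M x y') y := by
      rw [Finset.card_image_of_injective _ w'.injective,
        Finset.card_biUnion (fun a _ b _ hab => hdisjC x a b hab)]
      exact Finset.sum_congr rfl fun y'' _ => hcard x y''
    have hLsub : ((univ.filter (y < ·)).biUnion
        (fun y'' => blockSet n N d d' w' x y'')).image w'
        ⊆ univ.filter (fun r : Fin N => blkStart n d x ≤ (r : ℕ) ∧
            (r : ℕ) < ((w' j : Fin N) : ℕ)) := by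
      intro r hr
      rw [Finset.mem_image] at hr
      obtain ⟨j₂, hj₂, rfl⟩ := hr
      rw [Finset.mem_biUnion] at hj₂
      obtain ⟨y'', hy'', hm⟩ := hj₂
      rw [mem_filter] at hy''
      rw [mem_filter]
      exact ⟨mem_univ _, ((mem_blockSet_iff n N d d' w' x y'' j₂).mp hm).2.1,
        hz.2.1 x y y'' hy''.2 j hj j₂ hm⟩
    have hLle := Finset.card_le_card hLsub
    rw [hL, ZP.card_interval _ _ (le_of_lt (w' j).isLt)] at hLle
    -- blocks with smaller y (rows below)
    have hG : (((univ.filter (· < y)).biUnion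
        (fun y'' => blockSet n N d d' w' x y'')).image w').card
        = blkStart n (fun y' => M x y') y := by
      rw [Finset.card_image_of_injective _ w'.injective,
        Finset.card_biUnion (fun a _ b _ hab => hdisjC x a b hab)]
      exact Finset.sum_congr rfl fun y'' _ => hcard x y''
    have hGsub : ((univ.filter (· < y)).biUnion
        (fun y'' => blockSet n N d d' w' x y'')).image w'
        ⊆ univ.filter (fun r : Fin N => ((w' j : Fin N) : ℕ) + 1 ≤ (r : ℕ) ∧
            (r : ℕ) < blkStart n d x + d x) := by
      intro r hr
      rw [Finset.mem_image] at hr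
      obtain ⟨j₂, hj₂, rfl⟩ := hr
      rw [Finset.mem_biUnion] at hj₂
      obtain ⟨y'', hy'', hm⟩ := hj₂
      rw [mem_filter] at hy''
      rw [mem_filter]
      exact ⟨mem_univ _, hz.2.1 x y'' y hy''.2 j₂ hm j hj,
        ((mem_blockSet_iff n N d d' w' x y'' j₂).mp hm).2.2⟩
    have hGle := Finset.card_le_card hGsub
    have hbd : blkStart n d x + d x ≤ N := by
      have := ZP.blkStart_add_le_sum (e := d) x; omega
    rw [hG, ZP.card_interval _ _ hbd] at hGle
    have hsplit := ZP.sum_split (e := fun y' => M x y') y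
    rw [hrow x] at hsplit
    beta_reduce at hsplit
    omega
  -- conclusion
  have key : ∀ t : (x : Fin n) × (y : Fin n) × Fin (M x y),
      w' (colF n N d' M hN' hcol t) = zPerm n N d d' M hN hN' hrow hcol
        (colF n N d' M hN' hcol t) := by
    rintro ⟨x, y, k⟩
    have hm : 0 < M x y := lt_of_le_of_lt (Nat.zero_le _) k.isLt
    have hmemk : ∀ k' : Fin (M x y),
        colF n N d' M hN' hcol ⟨x, y, k'⟩ ∈ blockSet n N d d' w' x y := by
      intro k'
      refine (hU1 x y _).mpr ?_
      have hval : ((colF n N d' M hN' hcol ⟨x, y, k'⟩ : Fin N) : ℕ)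
          = blkStart n d' y + blkStart n (fun x' => M x' y) x + (k' : ℕ) := rfl
      have := k'.isLt
      omega
    set j₀ := colF n N d' M hN' hcol ⟨x, y, ⟨0, hm⟩⟩ with hj₀
    set jk := colF n N d' M hN' hcol ⟨x, y, k⟩ with hjk
    set jl := colF n N d' M hN' hcol ⟨x, y, ⟨M x y - 1, by omega⟩⟩ with hjl
    have h0 := hmemk ⟨0, hm⟩
    have hk := hmemk k
    have hl := hmemk ⟨M x y - 1, by omega⟩
    have hv0 : (j₀ : ℕ) = blkStart n d' y + blkStart n (fun x' => M x' y) x := by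
      show blkStart n d' y + blkStart n (fun x' => M x' y) x + 0 = _
      omega
    have hvk : (jk : ℕ) = blkStart n d' y + blkStart n (fun x' => M x' y) x + (k : ℕ) := rfl
    have hvl : (jl : ℕ) = blkStart n d' y + blkStart n (fun x' => M x' y) x
        + (M x y - 1) := rfl
    have hZ1a := (hz.1 x y j₀ h0 jk hk (by omega)).1
    have hZ1b := (hz.1 x y j₀ h0 jl hl (by omega)).1
    have hr0 := hfwdRow x y j₀ h0
    have hrk := hfwdRow x y jk hk
    have hrl := hfwdRow x y jl hl
    have hwk : ((w' jk : Fin N) : ℕ)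
        = blkStart n d x + aft n (fun y' => M x y') y + (k : ℕ) := by
      rw [hv0, hvk] at hZ1a
      rw [hv0, hvl] at hZ1b
      have hkl := k.isLt
      omega
    have hz' : ((zPerm n N d d' M hN hN' hrow hcol jk : Fin N) : ℕ)
        = blkStart n d x + aft n (fun y' => M x y') y + (k : ℕ) := by
      rw [hjk, zPerm_colF]
      rfl
    exact Fin.ext (hwk.trans hz'.symm)
  apply Equiv.ext
  intro j
  obtain ⟨t, rfl⟩ := colF_surj n N d d' M hN hN' hrow hcol j
  exact key t

end ZHelpers

/-- Among all blocked permutation matrices with block occupancy matrix `M`,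
there is exactly one of Z-type. -/
theorem stmt_14 (n N : ℕ) (d d' : Fin n → ℕ) (M : Fin n → Fin n → ℕ)
    (hN : N = ∑ i, d i) (hN' : N = ∑ i, d' i)
    (hrow : ∀ x, ∑ y, M x y = d x) (hcol : ∀ y, ∑ x, M x y = d' y) :
    ∃! w : Equiv.Perm (Fin N),
      (∀ x y, (blockSet n N d d' w x y).card = M x y) ∧ IsZType n N d d' w := by
  refine ⟨zPerm n N d d' M hN hN' hrow hcol,
    ⟨card_blockSet n N d d' M hN hN' hrow hcol, zPerm_isZ n N d d' M hN hN' hrow hcol⟩,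
    fun w' hw' => uniq n N d d' M hN hN' hrow hcol w' hw'.1 hw'.2⟩
end
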